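/- arXiv:math/0612264 — 8 statements merged into one kernel-verified Lean document; each statement's English description precedes it below -/
import Mathlib

section
/- Let z₀ ∈ ℂ with Re(z₀) > 0, and define the Newton iteration for the sign function by z_{k+1} = (z_k + z_k⁻¹)/2. Then: (i) every iterate z_k has strictly positive real part (in particular z_k ≠ 0, so the iteration is well defined); (ii) for every k, (z_k − 1)/(z_k + 1) = ((z₀ − 1)/(z₀ + 1))^(2^k); (iii) |(z₀ − 1)/(z₀ + 1)| < 1; and (iv) the sequence z_k converges to 1. -/
open Filter

lemma newton_abs_lt_one_aux (w : ℂ) (hw : 0 < w.re) :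
    ‖(w - 1) / (w + 1)‖ < 1 := by
  have h1 : ‖w + 1‖ ≠ 0 := by
    simp only [ne_eq, norm_eq_zero]
    intro h
    have : (w + 1).re = 0 := by rw [h]; simp
    simp [Complex.add_re] at this
    linarith
  rw [norm_div, div_lt_one (lt_of_le_of_ne (norm_nonneg _) (Ne.symm h1))]
  have : ‖w - 1‖ ^ 2 < ‖w + 1‖ ^ 2 := by
    rw [Complex.sq_norm, Complex.sq_norm, Complex.normSq_apply, Complex.normSq_apply]
    simp only [Complex.sub_re, Complex.sub_im, Complex.add_re, Complex.add_im,
      Complex.one_re, Complex.one_im]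
    nlinarith
  nlinarith [norm_nonneg (w - 1), norm_nonneg (w + 1)]

/-- Newton iteration for the sign function: if `Re z₀ > 0` and
`z_{k+1} = (z_k + z_k⁻¹)/2`, then every iterate has positive real part, the Cayley
transform conjugates the iteration to squaring, the Cayley transform of `z₀` lies
strictly inside the unit disc, and the iterates converge to `1`. -/
theorem newton_sign_iteration (z₀ : ℂ) (hz₀ : 0 < z₀.re)
    (z : ℕ → ℂ) (h0 : z 0 = z₀)
    (hrec : ∀ k, z (k + 1) = (z k + (z k)⁻¹) / 2) :
    (∀ k, 0 < (z k).re) ∧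
    (∀ k, (z k - 1) / (z k + 1) = ((z₀ - 1) / (z₀ + 1)) ^ (2 ^ k)) ∧
    ‖(z₀ - 1) / (z₀ + 1)‖ < 1 ∧
    Tendsto z atTop (nhds 1) := by
  -- (i)
  have hpos : ∀ k, 0 < (z k).re := by
    intro k
    induction k with
    | zero => rw [h0]; exact hz₀
    | succ k ih =>
      have hne : z k ≠ 0 := fun h => by simp [h] at ih
      rw [hrec k]
      have : ((z k + (z k)⁻¹) / 2).re = ((z k).re + ((z k)⁻¹).re) / 2 := by
        simp [Complex.div_re, Complex.add_re]
      rw [this, Complex.inv_re]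
      have hnsq : 0 < Complex.normSq (z k) := Complex.normSq_pos.mpr hne
      positivity
  have hne : ∀ k, z k ≠ 0 := fun k h => by
    have := hpos k; simp [h] at this
  have hne1 : ∀ k, z k + 1 ≠ 0 := by
    intro k h
    have : (z k + 1).re = 0 := by rw [h]; simp
    simp [Complex.add_re] at this
    have := hpos k; linarith
  -- (ii)
  have hcayley : ∀ k, (z k - 1) / (z k + 1) = ((z₀ - 1) / (z₀ + 1)) ^ (2 ^ k) := by
    intro k
    induction k with
    | zero => simp [h0]
    | succ k ih =>
      have key : (z (k + 1) - 1) / (z (k + 1) + 1) = ((z k - 1) / (z k + 1)) ^ 2 := by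
        rw [hrec k]
        have hstep : (z k + (z k)⁻¹) / 2 = ((z k) ^ 2 + 1) / (2 * z k) := by
          field_simp [hne k]
        rw [hstep]
        have h2 : (2 : ℂ) * z k ≠ 0 := mul_ne_zero two_ne_zero (hne k)
        have h3 : z k ^ 2 + 1 + 2 * z k ≠ 0 := by
          have : z k ^ 2 + 1 + 2 * z k = (z k + 1) ^ 2 := by ring
          rw [this]; exact pow_ne_zero 2 (hne1 k)
        rw [div_add_one h2, div_sub_one h2, div_div_div_cancel_right₀ h2, div_pow,
          div_eq_div_iff h3 (pow_ne_zero 2 (hne1 k))]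
        ring
      rw [key, ih, ← pow_mul, pow_succ]
  -- (iii)
  have habs : ‖(z₀ - 1) / (z₀ + 1)‖ < 1 := newton_abs_lt_one_aux z₀ hz₀
  refine ⟨hpos, hcayley, habs, ?_⟩
  -- (iv)
  set c : ℂ := (z₀ - 1) / (z₀ + 1) with hc
  have habsw : ∀ k, ‖c ^ (2 ^ k)‖ < 1 := by
    intro k
    rw [norm_pow]
    exact pow_lt_one₀ (norm_nonneg _) habs (Nat.two_pow_pos k).ne'
  have hden : ∀ k, (1 : ℂ) - c ^ (2 ^ k) ≠ 0 := by
    intro k h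
    have : c ^ (2 ^ k) = 1 := by linear_combination -h
    have hk := habsw k
    rw [this] at hk
    simp at hk
  have hz : ∀ k, z k = (1 + c ^ (2 ^ k)) / (1 - c ^ (2 ^ k)) := by
    intro k
    have h := hcayley k
    rw [div_eq_iff (hne1 k)] at h
    rw [eq_div_iff (hden k)]
    linear_combination h
  have hw0 : Tendsto (fun k => c ^ (2 ^ k)) atTop (nhds 0) := by
    have h1 : Tendsto (fun n : ℕ => c ^ n) atTop (nhds 0) :=
      tendsto_pow_atTop_nhds_zero_of_norm_lt_one (by simpa using habs)
    have h2 : Tendsto (fun k : ℕ => 2 ^ k) atTop atTop :=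
      tendsto_pow_atTop_atTop_of_one_lt one_lt_two
    exact h1.comp h2
  have : Tendsto (fun k => (1 + c ^ (2 ^ k)) / (1 - c ^ (2 ^ k))) atTop (nhds 1) := by
    have hnum : Tendsto (fun k => (1 : ℂ) + c ^ (2 ^ k)) atTop (nhds (1 + 0)) :=
      (tendsto_const_nhds (x := (1 : ℂ))).add hw0
    have hd : Tendsto (fun k => (1 : ℂ) - c ^ (2 ^ k)) atTop (nhds (1 - 0)) :=
      (tendsto_const_nhds (x := (1 : ℂ))).sub hw0
    have hdiv := hnum.div hd (by norm_num : (1:ℂ) - 0 ≠ 0)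
    simp only [add_zero, sub_zero, div_one] at hdiv; exact hdiv
  exact this.congr (fun k => (hz k).symm)
end

section
/- Let A be a p×p upper triangular matrix and B a q×q upper triangular matrix over ℂ. Then the linear map R ↦ A·R − R·B from p×q complex matrices to p×q complex matrices is bijective if and only if A_{ii} ≠ B_{jj} for all 1 ≤ i ≤ p and 1 ≤ j ≤ q, i.e. if and only if A and B have no common eigenvalue. -/
/-!
If `A * R = R * B` then `f(A) * R = R * f(B)` for every polynomial `f`. When the characteristic
polynomials are coprime, `u χ_A + v χ_B = 1`, and Cayley–Hamilton gives
`R = v(A) χ_B(A) R = v(A) R χ_B(B) = 0`. Conversely, a common eigenvalue `c` with `A v = c v` and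
`wᵀ B = c wᵀ` yields the nonzero solution `R = v wᵀ`. For upper triangular matrices
`χ_A = ∏ (X - A i i)`, so coprimality amounts to `A i i ≠ B j j` for all `i`, `j`.
-/

open Matrix Polynomial

namespace Matrix

variable {m n : Type*} [Fintype m] [Fintype n] [DecidableEq m] [DecidableEq n]

section CommRing

variable {R : Type*} [CommRing R] {A : Matrix m m R} {B : Matrix n n R} {M : Matrix m n R}

theorem pow_mul_eq_mul_pow_of_mul_eq_mul (h : A * M = M * B) (k : ℕ) :
    A ^ k * M = M * B ^ k := by
  induction k with
  | zero => simp
  | succ k ih => rw [pow_succ, pow_succ, Matrix.mul_assoc, h, ← Matrix.mul_assoc, ih,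
      Matrix.mul_assoc]

theorem aeval_mul_eq_mul_aeval_of_mul_eq_mul (h : A * M = M * B) (f : R[X]) :
    aeval A f * M = M * aeval B f := by
  induction f using Polynomial.induction_on' with
  | add f g hf hg => rw [map_add, map_add, Matrix.add_mul, Matrix.mul_add, hf, hg]
  | monomial k a =>
    simp only [aeval_monomial, Algebra.algebraMap_eq_smul_one, Matrix.smul_mul, Matrix.mul_smul,
      Matrix.one_mul, pow_mul_eq_mul_pow_of_mul_eq_mul h]

theorem eq_zero_of_mul_eq_mul_of_isCoprime_charpoly (hAB : IsCoprime A.charpoly B.charpoly)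
    (h : A * M = M * B) : M = 0 := by
  obtain ⟨u, v, huv⟩ := hAB
  calc M = aeval A (u * A.charpoly + v * B.charpoly) * M := by rw [huv, map_one, Matrix.one_mul]
    _ = aeval A v * (M * aeval B B.charpoly) := by
      rw [map_add, map_mul, map_mul, aeval_self_charpoly, mul_zero, zero_add, Matrix.mul_assoc,
        aeval_mul_eq_mul_aeval_of_mul_eq_mul h]
    _ = 0 := by rw [aeval_self_charpoly, Matrix.mul_zero, Matrix.mul_zero]

end CommRing

section Field

variable {K : Type*} [Field K] {A : Matrix m m K} {B : Matrix n n K}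

theorem exists_ne_zero_mul_eq_mul_of_isRoot_charpoly {c : K} (hA : A.charpoly.IsRoot c)
    (hB : B.charpoly.IsRoot c) : ∃ M : Matrix m n K, M ≠ 0 ∧ A * M = M * B := by
  obtain ⟨v, hv, hv_ker⟩ := exists_mulVec_eq_zero_iff.mpr ((eval_charpoly A c).symm.trans hA)
  obtain ⟨w, hw, hw_ker⟩ := exists_vecMul_eq_zero_iff.mpr ((eval_charpoly B c).symm.trans hB)
  have hvw : vecMulVec v w ≠ 0 := by
    obtain ⟨i, hi⟩ := Function.ne_iff.mp hv
    obtain ⟨j, hj⟩ := Function.ne_iff.mp hw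
    exact fun h => mul_ne_zero hi hj congr($h i j)
  have hAv : A *ᵥ v = c • v := by
    simpa [sub_mulVec, sub_eq_zero, eq_comm] using hv_ker
  have hwB : w ᵥ* B = c • w := by
    simpa [vecMul_sub, sub_eq_zero, eq_comm] using hw_ker
  refine ⟨vecMulVec v w, hvw, ?_⟩
  rw [mul_vecMulVec, vecMulVec_mul, hAv, hwB, smul_vecMulVec, vecMulVec_smul]

theorem bijective_mul_sub_mul_of_isCoprime_charpoly (hAB : IsCoprime A.charpoly B.charpoly) :
    Function.Bijective (fun M : Matrix m n K => A * M - M * B) := by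
  let f := mulLeftLinearMap n K A - mulRightLinearMap m K B
  have hf : Function.Injective f := by
    rw [injective_iff_map_eq_zero]
    exact fun M hM => eq_zero_of_mul_eq_mul_of_isCoprime_charpoly hAB (sub_eq_zero.mp hM)
  exact ⟨hf, LinearMap.injective_iff_surjective.mp hf⟩

end Field

section UpperTriangular

variable {R : Type*} [CommRing R] [LinearOrder m] [LinearOrder n]

theorem isRoot_charpoly_of_isUpperTriangular {A : Matrix m m R} (hA : A.IsUpperTriangular)
    (i : m) : A.charpoly.IsRoot (A i i) := by
  rw [charpoly_of_isUpperTriangular A hA, IsRoot, eval_prod]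
  exact Finset.prod_eq_zero (Finset.mem_univ i) (by simp)

theorem isCoprime_charpoly_of_isUpperTriangular {A : Matrix m m R} {B : Matrix n n R}
    (hA : A.IsUpperTriangular) (hB : B.IsUpperTriangular) (h : ∀ i j, IsUnit (A i i - B j j)) :
    IsCoprime A.charpoly B.charpoly := by
  rw [charpoly_of_isUpperTriangular A hA, charpoly_of_isUpperTriangular B hB,
    IsCoprime.prod_left_iff]
  exact fun i _ => IsCoprime.prod_right_iff.mpr fun j _ => isCoprime_X_sub_C_of_isUnit_sub (h i j)

end UpperTriangular

end Matrix

/-- For upper triangular complex matrices `A` (p×p) and `B` (q×q), the Sylvester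
operator `R ↦ A·R − R·B` is bijective iff `A i i ≠ B j j` for all `i`, `j`,
i.e. iff `A` and `B` have no common eigenvalue. -/
theorem sylvester_bijective_iff_no_common_eigenvalue {p q : ℕ}
    (A : Matrix (Fin p) (Fin p) ℂ) (B : Matrix (Fin q) (Fin q) ℂ)
    (hA : A.BlockTriangular id) (hB : B.BlockTriangular id) :
    Function.Bijective (fun R : Matrix (Fin p) (Fin q) ℂ => A * R - R * B) ↔
      ∀ (i : Fin p) (j : Fin q), A i i ≠ B j j := by
  constructor
  · intro hbij i j hij
    obtain ⟨R, hR0, hR⟩ := exists_ne_zero_mul_eq_mul_of_isRoot_charpoly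
      (isRoot_charpoly_of_isUpperTriangular hA i) (hij ▸ isRoot_charpoly_of_isUpperTriangular hB j)
    exact hR0 (hbij.injective (by simp [hR]))
  · intro h
    exact bijective_mul_sub_mul_of_isCoprime_charpoly
      (isCoprime_charpoly_of_isUpperTriangular hA hB fun i j => (sub_ne_zero.mpr (h i j)).isUnit)
end

section
/- Let A = [[A₁₁, A₁₂], [0, A₂₂]] be a block upper triangular real matrix with square diagonal blocks A₁₁ (p₁×p₁) and A₂₂ (p₂×p₂), and let B = [[B₁₁, B₁₂], [0, B₂₂]] be block upper triangular with square diagonal blocks B₁₁ (q₁×q₁) and B₂₂ (q₂×q₂), all block dimensions positive. Then for every i, j ∈ {1,2}, sep(A_{ii}, B_{jj}) ≥ sep(A, B), where sep(X,Y) = inf{‖X·R − R·Y‖_F : ‖R‖_F = 1}. -/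
set_option linter.unusedSectionVars false

open Matrix

/-- The Frobenius norm of a real matrix. -/
noncomputable def frobNorm {m n : Type*} [Fintype m] [Fintype n]
    (M : Matrix m n ℝ) : ℝ :=
  Real.sqrt (∑ i, ∑ j, M i j ^ 2)

section helpers
variable {m n m₁ m₂ n₁ n₂ : Type*} [Fintype m] [Fintype n] [Fintype m₁] [Fintype m₂]
  [Fintype n₁] [Fintype n₂]

lemma frobNorm_nonneg (M : Matrix m n ℝ) : 0 ≤ frobNorm M := Real.sqrt_nonneg _

lemma frobSq_nonneg (M : Matrix m n ℝ) : 0 ≤ ∑ i, ∑ j, M i j ^ 2 := by positivity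

lemma frobNorm_smul (c : ℝ) (M : Matrix m n ℝ) : frobNorm (c • M) = |c| * frobNorm M := by
  unfold frobNorm
  simp only [Matrix.smul_apply, smul_eq_mul, mul_pow, ← Finset.mul_sum]
  rw [Real.sqrt_mul (sq_nonneg c), Real.sqrt_sq_eq_abs]

lemma frobNorm_pos {M : Matrix m n ℝ} (h : M ≠ 0) : 0 < frobNorm M := by
  have : ∃ i j, M i j ≠ 0 := by
    by_contra hc
    push_neg at hc
    exact h (by ext i j; simp [hc i j])
  obtain ⟨i, j, hij⟩ := this
  apply Real.sqrt_pos.mpr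
  have h1 : 0 < M i j ^ 2 := by positivity
  have h2 : M i j ^ 2 ≤ ∑ i', ∑ j', M i' j' ^ 2 := by
    calc M i j ^ 2 ≤ ∑ j', M i j' ^ 2 :=
          Finset.single_le_sum (f := fun j' => M i j' ^ 2) (fun _ _ => sq_nonneg _) (Finset.mem_univ j)
      _ ≤ ∑ i', ∑ j', M i' j' ^ 2 :=
          Finset.single_le_sum (f := fun i' => ∑ j', M i' j' ^ 2)
            (fun _ _ => Finset.sum_nonneg fun _ _ => sq_nonneg _) (Finset.mem_univ i)
  linarith

lemma frobSq_fromColumns (M₁ : Matrix m n₁ ℝ) (M₂ : Matrix m n₂ ℝ) :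
    ∑ i, ∑ j, (fromCols M₁ M₂) i j ^ 2
      = (∑ i, ∑ j, M₁ i j ^ 2) + ∑ i, ∑ j, M₂ i j ^ 2 := by
  simp [Fintype.sum_sum_type, Finset.sum_add_distrib]

lemma frobSq_fromRows (M₁ : Matrix m₁ n ℝ) (M₂ : Matrix m₂ n ℝ) :
    ∑ i, ∑ j, (fromRows M₁ M₂) i j ^ 2
      = (∑ i, ∑ j, M₁ i j ^ 2) + ∑ i, ∑ j, M₂ i j ^ 2 := by
  simp [Fintype.sum_sum_type]

lemma frobNorm_fromColumns_zero_left (M₂ : Matrix m n₂ ℝ) :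
    frobNorm (fromCols (0 : Matrix m n₁ ℝ) M₂) = frobNorm M₂ := by
  unfold frobNorm; rw [frobSq_fromColumns]; simp

lemma frobNorm_fromColumns_zero_right (M₁ : Matrix m n₁ ℝ) :
    frobNorm (fromCols M₁ (0 : Matrix m n₂ ℝ)) = frobNorm M₁ := by
  unfold frobNorm; rw [frobSq_fromColumns]; simp

lemma frobNorm_fromRows_zero_left (M₂ : Matrix m₂ n ℝ) :
    frobNorm (fromRows (0 : Matrix m₁ n ℝ) M₂) = frobNorm M₂ := by
  unfold frobNorm; rw [frobSq_fromRows]; simp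

lemma frobNorm_fromRows_zero_right (M₁ : Matrix m₁ n ℝ) :
    frobNorm (fromRows M₁ (0 : Matrix m₂ n ℝ)) = frobNorm M₁ := by
  unfold frobNorm; rw [frobSq_fromRows]; simp

lemma le_frobNorm_fromColumns_left (M₁ : Matrix m n₁ ℝ) (M₂ : Matrix m n₂ ℝ) :
    frobNorm M₁ ≤ frobNorm (fromCols M₁ M₂) := by
  unfold frobNorm; rw [frobSq_fromColumns]
  exact Real.sqrt_le_sqrt (by linarith [frobSq_nonneg M₂])

lemma le_frobNorm_fromRows_right (M₁ : Matrix m₁ n ℝ) (M₂ : Matrix m₂ n ℝ) :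
    frobNorm M₂ ≤ frobNorm (fromRows M₁ M₂) := by
  unfold frobNorm; rw [frobSq_fromRows]
  exact Real.sqrt_le_sqrt (by linarith [frobSq_nonneg M₁])

lemma fromColumns_sub (M₁ N₁ : Matrix m n₁ ℝ) (M₂ N₂ : Matrix m n₂ ℝ) :
    fromCols M₁ M₂ - fromCols N₁ N₂ = fromCols (M₁ - N₁) (M₂ - N₂) := by
  ext i (j | j) <;> simp

lemma fromRows_sub (M₁ N₁ : Matrix m₁ n ℝ) (M₂ N₂ : Matrix m₂ n ℝ) :
    fromRows M₁ M₂ - fromRows N₁ N₂ = fromRows (M₁ - N₁) (M₂ - N₂) := by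
  ext (i | i) j <;> simp

lemma exists_frobNorm_one [Nonempty m] [Nonempty n] : ∃ R : Matrix m n ℝ, frobNorm R = 1 := by
  obtain ⟨i₀⟩ := (inferInstance : Nonempty m)
  obtain ⟨j₀⟩ := (inferInstance : Nonempty n)
  classical
  refine ⟨Matrix.single i₀ j₀ 1, ?_⟩
  unfold frobNorm
  have : ∑ i, ∑ j, (Matrix.single i₀ j₀ (1:ℝ)) i j ^ 2 = 1 := by
    simp [Matrix.single, ite_and, ite_pow, Finset.sum_ite_eq]
  rw [this, Real.sqrt_one]
end helpers


/-- `sep(A,B) = inf{‖A·R − R·B‖_F : ‖R‖_F = 1}`, measuring the invertibility of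
the Sylvester operator `R ↦ A·R − R·B`. -/
noncomputable def sylSep {m n : Type*} [Fintype m] [Fintype n]
    (A : Matrix m m ℝ) (B : Matrix n n ℝ) : ℝ :=
  sInf {t | ∃ R : Matrix m n ℝ, frobNorm R = 1 ∧ t = frobNorm (A * R - R * B)}
section syl
variable {m n m₁ m₂ n₁ n₂ : Type*} [Fintype m] [Fintype n] [Fintype m₁] [Fintype m₂]
  [Fintype n₁] [Fintype n₂]

lemma sylSep_bddBelow (A : Matrix m m ℝ) (B : Matrix n n ℝ) :
    BddBelow {t | ∃ R : Matrix m n ℝ, frobNorm R = 1 ∧ t = frobNorm (A * R - R * B)} :=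
  ⟨0, by rintro t ⟨S, -, rfl⟩; exact frobNorm_nonneg _⟩

lemma sylSep_le (A : Matrix m m ℝ) (B : Matrix n n ℝ) {R : Matrix m n ℝ}
    (hR : frobNorm R = 1) : sylSep A B ≤ frobNorm (A * R - R * B) :=
  csInf_le (sylSep_bddBelow A B) ⟨R, hR, rfl⟩

lemma sylSep_le_of_one_le (A : Matrix m m ℝ) (B : Matrix n n ℝ) {S : Matrix m n ℝ}
    (hS : 1 ≤ frobNorm S) : sylSep A B ≤ frobNorm (A * S - S * B) := by
  have hpos : 0 < frobNorm S := lt_of_lt_of_le one_pos hS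
  set ν := frobNorm S with hν
  have hR : frobNorm (ν⁻¹ • S) = 1 := by
    rw [frobNorm_smul, abs_of_pos (inv_pos.mpr hpos), inv_mul_cancel₀ hpos.ne']
  have h := sylSep_le A B hR
  rw [show A * (ν⁻¹ • S) - (ν⁻¹ • S) * B = ν⁻¹ • (A * S - S * B) by
    rw [Matrix.mul_smul, Matrix.smul_mul, smul_sub], frobNorm_smul] at h
  have hinv : |ν⁻¹| ≤ 1 := by
    rw [abs_of_pos (inv_pos.mpr hpos)]
    exact inv_le_one_of_one_le₀ hS
  calc sylSep A B ≤ |ν⁻¹| * frobNorm (A * S - S * B) := h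
    _ ≤ 1 * frobNorm (A * S - S * B) :=
        mul_le_mul_of_nonneg_right hinv (frobNorm_nonneg _)
    _ = frobNorm (A * S - S * B) := one_mul _

lemma frobNorm_zero : frobNorm (0 : Matrix m n ℝ) = 0 := by
  unfold frobNorm; simp

lemma sylSep_nonpos_of_kernel (A : Matrix m m ℝ) (B : Matrix n n ℝ) {S : Matrix m n ℝ}
    (hS : S ≠ 0) (h : A * S = S * B) : sylSep A B ≤ 0 := by
  have := sylSep_le_of_one_le A B (S := (frobNorm S)⁻¹ • S)
    (by rw [frobNorm_smul, abs_of_pos (inv_pos.mpr (frobNorm_pos hS)),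
          inv_mul_cancel₀ (frobNorm_pos hS).ne'])
  rw [show A * ((frobNorm S)⁻¹ • S) - ((frobNorm S)⁻¹ • S) * B
        = (frobNorm S)⁻¹ • (A * S - S * B) by
      rw [Matrix.mul_smul, Matrix.smul_mul, smul_sub], h, sub_self, smul_zero,
    frobNorm_zero] at this
  exact this

/-- The Sylvester operator `R ↦ X·R − R·Y` as a linear map. -/
def sylMap (X : Matrix m m ℝ) (Y : Matrix n n ℝ) :
    Matrix m n ℝ →ₗ[ℝ] Matrix m n ℝ where
  toFun R := X * R - R * Y
  map_add' R S := by rw [Matrix.mul_add, Matrix.add_mul]; abel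
  map_smul' c R := by
    simp only [Matrix.mul_smul, Matrix.smul_mul, smul_sub, RingHom.id_apply]

end syl

section steps
variable {m n m₁ m₂ n₁ n₂ : Type*} [Fintype m] [Fintype n] [Fintype m₁] [Fintype m₂]
  [Fintype n₁] [Fintype n₂]

lemma fromColumns_eq_zero_iff {M₁ : Matrix m n₁ ℝ} {M₂ : Matrix m n₂ ℝ}
    (h : fromCols M₁ M₂ = 0) : M₁ = 0 ∧ M₂ = 0 := by
  constructor <;> ext i j
  · simpa using congrFun (congrFun h i) (Sum.inl j)
  · simpa using congrFun (congrFun h i) (Sum.inr j)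

lemma fromRows_eq_zero_iff {M₁ : Matrix m₁ n ℝ} {M₂ : Matrix m₂ n ℝ}
    (h : fromRows M₁ M₂ = 0) : M₁ = 0 ∧ M₂ = 0 := by
  constructor <;> ext i j
  · simpa using congrFun (congrFun h (Sum.inl i)) j
  · simpa using congrFun (congrFun h (Sum.inr i)) j

lemma step_right_second [Nonempty m] [Nonempty n₂]
    (X : Matrix m m ℝ) (B₁₁ : Matrix n₁ n₁ ℝ) (B₁₂ : Matrix n₁ n₂ ℝ)
    (B₂₂ : Matrix n₂ n₂ ℝ) :
    sylSep X (fromBlocks B₁₁ B₁₂ 0 B₂₂) ≤ sylSep X B₂₂ := by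
  apply le_csInf
  · obtain ⟨R, hR⟩ := exists_frobNorm_one (m := m) (n := n₂)
    exact ⟨_, R, hR, rfl⟩
  rintro t ⟨R, hR, rfl⟩
  have key : X * fromCols (0 : Matrix m n₁ ℝ) R - fromCols (0 : Matrix m n₁ ℝ) R * fromBlocks B₁₁ B₁₂ 0 B₂₂
      = fromCols 0 (X * R - R * B₂₂) := by
    rw [mul_fromCols, fromCols_mul_fromBlocks, fromColumns_sub]
    congr 1 <;> simp
  calc sylSep X (fromBlocks B₁₁ B₁₂ 0 B₂₂)
      ≤ frobNorm (X * fromCols (0 : Matrix m n₁ ℝ) R - fromCols (0 : Matrix m n₁ ℝ) R * fromBlocks B₁₁ B₁₂ 0 B₂₂) :=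
        sylSep_le _ _ (by rw [frobNorm_fromColumns_zero_left]; exact hR)
    _ = frobNorm (X * R - R * B₂₂) := by rw [key, frobNorm_fromColumns_zero_left]

lemma step_left_first [Nonempty m₁] [Nonempty n]
    (A₁₁ : Matrix m₁ m₁ ℝ) (A₁₂ : Matrix m₁ m₂ ℝ) (A₂₂ : Matrix m₂ m₂ ℝ)
    (Y : Matrix n n ℝ) :
    sylSep (fromBlocks A₁₁ A₁₂ 0 A₂₂) Y ≤ sylSep A₁₁ Y := by
  apply le_csInf
  · obtain ⟨R, hR⟩ := exists_frobNorm_one (m := m₁) (n := n)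
    exact ⟨_, R, hR, rfl⟩
  rintro t ⟨R, hR, rfl⟩
  have key : fromBlocks A₁₁ A₁₂ 0 A₂₂ * fromRows R (0 : Matrix m₂ n ℝ) - fromRows R (0 : Matrix m₂ n ℝ) * Y
      = fromRows (A₁₁ * R - R * Y) 0 := by
    rw [fromBlocks_mul_fromRows, fromRows_mul, fromRows_sub]
    congr 1 <;> simp
  calc sylSep (fromBlocks A₁₁ A₁₂ 0 A₂₂) Y
      ≤ frobNorm (fromBlocks A₁₁ A₁₂ 0 A₂₂ * fromRows R (0 : Matrix m₂ n ℝ) - fromRows R (0 : Matrix m₂ n ℝ) * Y) :=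
        sylSep_le _ _ (by rw [frobNorm_fromRows_zero_right]; exact hR)
    _ = frobNorm (A₁₁ * R - R * Y) := by rw [key, frobNorm_fromRows_zero_right]

lemma step_right_first [Nonempty m] [Nonempty n₁]
    (X : Matrix m m ℝ) (B₁₁ : Matrix n₁ n₁ ℝ) (B₁₂ : Matrix n₁ n₂ ℝ)
    (B₂₂ : Matrix n₂ n₂ ℝ) :
    sylSep X (fromBlocks B₁₁ B₁₂ 0 B₂₂) ≤ sylSep X B₁₁ := by
  apply le_csInf
  · obtain ⟨R, hR⟩ := exists_frobNorm_one (m := m) (n := n₁)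
    exact ⟨_, R, hR, rfl⟩
  rintro t ⟨R₁, hR₁, rfl⟩
  by_cases hinj : Function.Injective (sylMap X B₂₂ : Matrix m n₂ ℝ →ₗ[ℝ] Matrix m n₂ ℝ)
  · obtain ⟨R₂, hR₂⟩ := (LinearMap.injective_iff_surjective.mp hinj) (R₁ * B₁₂)
    have hR₂' : X * R₂ - R₂ * B₂₂ = R₁ * B₁₂ := hR₂
    have hone : 1 ≤ frobNorm (fromCols R₁ R₂) :=
      hR₁ ▸ le_frobNorm_fromColumns_left R₁ R₂
    have key : X * fromCols R₁ R₂ - fromCols R₁ R₂ * fromBlocks B₁₁ B₁₂ 0 B₂₂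
        = fromCols (X * R₁ - R₁ * B₁₁) 0 := by
      rw [mul_fromCols, fromCols_mul_fromBlocks, fromColumns_sub]
      have h1 : X * R₁ - (R₁ * B₁₁ + R₂ * (0 : Matrix n₂ n₁ ℝ)) = X * R₁ - R₁ * B₁₁ := by
        rw [Matrix.mul_zero, add_zero]
      have h2 : X * R₂ - (R₁ * B₁₂ + R₂ * B₂₂) = 0 := by rw [← hR₂']; abel
      rw [h1, h2]
    calc sylSep X (fromBlocks B₁₁ B₁₂ 0 B₂₂)
        ≤ frobNorm (X * fromCols R₁ R₂
            - fromCols R₁ R₂ * fromBlocks B₁₁ B₁₂ 0 B₂₂) :=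
          sylSep_le_of_one_le _ _ hone
      _ = frobNorm (X * R₁ - R₁ * B₁₁) := by rw [key, frobNorm_fromColumns_zero_right]
  · have hker : LinearMap.ker (sylMap X B₂₂ : Matrix m n₂ ℝ →ₗ[ℝ] Matrix m n₂ ℝ) ≠ ⊥ :=
      fun h => hinj (LinearMap.ker_eq_bot.mp h)
    obtain ⟨S, hSmem, hS0⟩ := (Submodule.ne_bot_iff _).mp hker
    have hS : X * S - S * B₂₂ = 0 := hSmem
    have hfull : X * fromCols (0 : Matrix m n₁ ℝ) S = fromCols (0 : Matrix m n₁ ℝ) S * fromBlocks B₁₁ B₁₂ 0 B₂₂ := by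
      rw [mul_fromCols, fromCols_mul_fromBlocks, Matrix.mul_zero, Matrix.zero_mul,
        Matrix.mul_zero, add_zero, Matrix.zero_mul, zero_add, sub_eq_zero.mp hS]
    have hne : fromCols (0 : Matrix m n₁ ℝ) S ≠ 0 :=
      fun h => hS0 (fromColumns_eq_zero_iff h).2
    calc sylSep X (fromBlocks B₁₁ B₁₂ 0 B₂₂) ≤ 0 :=
          sylSep_nonpos_of_kernel _ _ hne hfull
      _ ≤ frobNorm (X * R₁ - R₁ * B₁₁) := frobNorm_nonneg _

lemma step_left_second [Nonempty m₂] [Nonempty n]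
    (A₁₁ : Matrix m₁ m₁ ℝ) (A₁₂ : Matrix m₁ m₂ ℝ) (A₂₂ : Matrix m₂ m₂ ℝ)
    (Y : Matrix n n ℝ) :
    sylSep (fromBlocks A₁₁ A₁₂ 0 A₂₂) Y ≤ sylSep A₂₂ Y := by
  apply le_csInf
  · obtain ⟨R, hR⟩ := exists_frobNorm_one (m := m₂) (n := n)
    exact ⟨_, R, hR, rfl⟩
  rintro t ⟨R₂, hR₂, rfl⟩
  by_cases hinj : Function.Injective (sylMap A₁₁ Y : Matrix m₁ n ℝ →ₗ[ℝ] Matrix m₁ n ℝ)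
  · obtain ⟨R₁, hR₁⟩ := (LinearMap.injective_iff_surjective.mp hinj) (-(A₁₂ * R₂))
    have hR₁' : A₁₁ * R₁ - R₁ * Y = -(A₁₂ * R₂) := hR₁
    have hone : 1 ≤ frobNorm (fromRows R₁ R₂) :=
      hR₂ ▸ le_frobNorm_fromRows_right R₁ R₂
    have key : fromBlocks A₁₁ A₁₂ 0 A₂₂ * fromRows R₁ R₂ - fromRows R₁ R₂ * Y
        = fromRows 0 (A₂₂ * R₂ - R₂ * Y) := by
      rw [fromBlocks_mul_fromRows, fromRows_mul, fromRows_sub]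
      have h1 : A₁₁ * R₁ + A₁₂ * R₂ - R₁ * Y = 0 := by
        rw [sub_eq_iff_eq_add.mp hR₁']; abel
      have h2 : (0 : Matrix m₂ m₁ ℝ) * R₁ + A₂₂ * R₂ - R₂ * Y = A₂₂ * R₂ - R₂ * Y := by
        rw [Matrix.zero_mul, zero_add]
      rw [h1, h2]
    calc sylSep (fromBlocks A₁₁ A₁₂ 0 A₂₂) Y
        ≤ frobNorm (fromBlocks A₁₁ A₁₂ 0 A₂₂ * fromRows R₁ R₂ - fromRows R₁ R₂ * Y) :=
          sylSep_le_of_one_le _ _ hone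
      _ = frobNorm (A₂₂ * R₂ - R₂ * Y) := by rw [key, frobNorm_fromRows_zero_left]
  · have hker : LinearMap.ker (sylMap A₁₁ Y : Matrix m₁ n ℝ →ₗ[ℝ] Matrix m₁ n ℝ) ≠ ⊥ :=
      fun h => hinj (LinearMap.ker_eq_bot.mp h)
    obtain ⟨S, hSmem, hS0⟩ := (Submodule.ne_bot_iff _).mp hker
    have hS : A₁₁ * S - S * Y = 0 := hSmem
    have hfull : fromBlocks A₁₁ A₁₂ 0 A₂₂ * fromRows S (0 : Matrix m₂ n ℝ) = fromRows S (0 : Matrix m₂ n ℝ) * Y := by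
      rw [fromBlocks_mul_fromRows, fromRows_mul, Matrix.mul_zero, Matrix.zero_mul,
        Matrix.mul_zero, add_zero, Matrix.zero_mul, zero_add, sub_eq_zero.mp hS]
    have hne : fromRows S (0 : Matrix m₂ n ℝ) ≠ 0 :=
      fun h => hS0 (fromRows_eq_zero_iff h).1
    calc sylSep (fromBlocks A₁₁ A₁₂ 0 A₂₂) Y ≤ 0 :=
          sylSep_nonpos_of_kernel _ _ hne hfull
      _ ≤ frobNorm (A₂₂ * R₂ - R₂ * Y) := frobNorm_nonneg _

end steps


/-- For block upper triangular `A = [[A₁₁,A₁₂],[0,A₂₂]]` and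
`B = [[B₁₁,B₁₂],[0,B₂₂]]`, every pair of diagonal blocks satisfies
`sep(A_ii, B_jj) ≥ sep(A,B)`. -/
theorem sep_diagonal_blocks_ge {p₁ p₂ q₁ q₂ : ℕ}
    (hp₁ : 0 < p₁) (hp₂ : 0 < p₂) (hq₁ : 0 < q₁) (hq₂ : 0 < q₂)
    (A₁₁ : Matrix (Fin p₁) (Fin p₁) ℝ) (A₁₂ : Matrix (Fin p₁) (Fin p₂) ℝ)
    (A₂₂ : Matrix (Fin p₂) (Fin p₂) ℝ)
    (B₁₁ : Matrix (Fin q₁) (Fin q₁) ℝ) (B₁₂ : Matrix (Fin q₁) (Fin q₂) ℝ)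
    (B₂₂ : Matrix (Fin q₂) (Fin q₂) ℝ) :
    let A : Matrix (Fin p₁ ⊕ Fin p₂) (Fin p₁ ⊕ Fin p₂) ℝ := fromBlocks A₁₁ A₁₂ 0 A₂₂
    let B : Matrix (Fin q₁ ⊕ Fin q₂) (Fin q₁ ⊕ Fin q₂) ℝ := fromBlocks B₁₁ B₁₂ 0 B₂₂
    sylSep A B ≤ sylSep A₁₁ B₁₁ ∧ sylSep A B ≤ sylSep A₁₁ B₂₂ ∧
    sylSep A B ≤ sylSep A₂₂ B₁₁ ∧ sylSep A B ≤ sylSep A₂₂ B₂₂ := by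
  haveI : Nonempty (Fin p₁) := Fin.pos_iff_nonempty.mp hp₁
  haveI : Nonempty (Fin p₂) := Fin.pos_iff_nonempty.mp hp₂
  haveI : Nonempty (Fin q₁) := Fin.pos_iff_nonempty.mp hq₁
  haveI : Nonempty (Fin q₂) := Fin.pos_iff_nonempty.mp hq₂
  intro A B
  have h1 : sylSep A B ≤ sylSep A₁₁ B := step_left_first A₁₁ A₁₂ A₂₂ B
  have h2 : sylSep A B ≤ sylSep A₂₂ B := step_left_second A₁₁ A₁₂ A₂₂ B
  exact ⟨h1.trans (step_right_first A₁₁ B₁₁ B₁₂ B₂₂),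
    h1.trans (step_right_second A₁₁ B₁₁ B₁₂ B₂₂),
    h2.trans (step_right_first A₂₂ B₁₁ B₁₂ B₂₂),
    h2.trans (step_right_second A₂₂ B₁₁ B₁₂ B₂₂)⟩
end

section
/- Let W₁ be an n×m matrix, Y₁ an m×n matrix, W₂ an n×k matrix, and Y₂ a k×n matrix over a commutative ring. Then (I − W₂·Y₂)·(I − W₁·Y₁) = I − W·Y, where W is the n×(m+k) matrix whose first m columns are W₁ − W₂·(Y₂·W₁) and whose last k columns are W₂, and Y is the (m+k)×n matrix whose first m rows are Y₁ and whose last k rows are Y₂. -/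
open Matrix

/-- Combining two WY representations:
`(I − W₂·Y₂)·(I − W₁·Y₁) = I − W·Y` where `W = [W₁ − W₂·(Y₂·W₁), W₂]` (columns)
and `Y = [Y₁; Y₂]` (rows). -/
theorem wy_representation_combine {n m k : ℕ} {R : Type*} [CommRing R]
    (W₁ : Matrix (Fin n) (Fin m) R) (Y₁ : Matrix (Fin m) (Fin n) R)
    (W₂ : Matrix (Fin n) (Fin k) R) (Y₂ : Matrix (Fin k) (Fin n) R) :
    (1 - W₂ * Y₂) * (1 - W₁ * Y₁) =
      1 - fromCols (W₁ - W₂ * (Y₂ * W₁)) W₂ * fromRows Y₁ Y₂ := by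
  rw [fromCols_mul_fromRows]
  simp only [Matrix.sub_mul, Matrix.mul_sub, Matrix.mul_one, Matrix.one_mul, Matrix.mul_assoc]
  abel
end

section
/- Let H = [[A, B], [Bᵀ, C]] be a real symmetric positive definite matrix of size (r+s)×(r+s), where A is r×r symmetric, C is s×s symmetric, and B is r×s, and suppose xᵀHx ≤ Λ‖x‖₂² for all x ∈ ℝ^{r+s}, with Λ > 0. Then ‖Bᵀ·A⁻¹·B‖₂ ≤ ‖C‖₂ + ‖S‖₂ ≤ 2Λ, where S = C − Bᵀ·A⁻¹·B is the Schur complement and ‖·‖₂ denotes the ℓ² operator norm (largest singular value). -/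
open Matrix

/-- The Euclidean norm of a real vector. -/
noncomputable def euclNorm {n : Type*} [Fintype n] (v : n → ℝ) : ℝ :=
  Real.sqrt (v ⬝ᵥ v)

/-- The ℓ² operator norm (largest singular value) of a real matrix:
the supremum of `‖M·x‖₂` over Euclidean-unit vectors `x`. -/
noncomputable def opNorm2 {m n : Type*} [Fintype m] [Fintype n]
    (M : Matrix m n ℝ) : ℝ :=
  sSup {t | ∃ x : n → ℝ, euclNorm x = 1 ∧ t = euclNorm (M *ᵥ x)}

lemma euclNorm_nonneg {n : Type*} [Fintype n] (v : n → ℝ) : 0 ≤ euclNorm v :=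
  Real.sqrt_nonneg _

lemma dot_self_nonneg {n : Type*} [Fintype n] (v : n → ℝ) : 0 ≤ v ⬝ᵥ v :=
  Finset.sum_nonneg fun i _ => mul_self_nonneg _

lemma dot_symm_swap {n : Type*} [Fintype n] {M : Matrix n n ℝ} (hsymm : Mᵀ = M)
    (x y : n → ℝ) : x ⬝ᵥ (M *ᵥ y) = y ⬝ᵥ (M *ᵥ x) := by
  rw [dotProduct_mulVec, ← mulVec_transpose, hsymm, dotProduct_comm]

/-- Cauchy–Schwarz for a real symmetric positive semidefinite bilinear form. -/
lemma psd_cauchy {n : Type*} [Fintype n] {M : Matrix n n ℝ} (hsymm : Mᵀ = M)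
    (hpsd : ∀ z : n → ℝ, 0 ≤ z ⬝ᵥ (M *ᵥ z)) (x y : n → ℝ) :
    (x ⬝ᵥ (M *ᵥ y)) ^ 2 ≤ (x ⬝ᵥ (M *ᵥ x)) * (y ⬝ᵥ (M *ᵥ y)) := by
  have hxy : y ⬝ᵥ (M *ᵥ x) = x ⬝ᵥ (M *ᵥ y) := dot_symm_swap hsymm y x
  have key : ∀ t : ℝ,
      0 ≤ (y ⬝ᵥ (M *ᵥ y)) * (t * t) + (2 * (x ⬝ᵥ (M *ᵥ y))) * t + (x ⬝ᵥ (M *ᵥ x)) := by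
    intro t
    have h := hpsd (x + t • y)
    have hexp : (x + t • y) ⬝ᵥ (M *ᵥ (x + t • y)) =
        (y ⬝ᵥ (M *ᵥ y)) * (t * t) + (2 * (x ⬝ᵥ (M *ᵥ y))) * t + (x ⬝ᵥ (M *ᵥ x)) := by
      simp only [mulVec_add, mulVec_smul, dotProduct_add, add_dotProduct,
        dotProduct_smul, smul_dotProduct, smul_eq_mul]
      rw [hxy]; ring
    rw [hexp] at h
    exact h
  have hd := discrim_le_zero key
  rw [discrim] at hd
  nlinarith [hd]

/-- Cauchy–Schwarz for the dot product. -/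
lemma dot_cauchy {n : Type*} [Fintype n] (x y : n → ℝ) :
    (x ⬝ᵥ y) ^ 2 ≤ (x ⬝ᵥ x) * (y ⬝ᵥ y) := by
  letI := Classical.decEq n
  have := psd_cauchy (M := (1 : Matrix n n ℝ)) (by simp)
    (fun z => by simpa [one_mulVec] using dot_self_nonneg z) x y
  simpa [one_mulVec] using this

lemma euclNorm_add_le {n : Type*} [Fintype n] (u v : n → ℝ) :
    euclNorm (u + v) ≤ euclNorm u + euclNorm v := by
  have hc : u ⬝ᵥ v ≤ Real.sqrt (u ⬝ᵥ u) * Real.sqrt (v ⬝ᵥ v) := by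
    have h1 : u ⬝ᵥ v ≤ Real.sqrt ((u ⬝ᵥ v) ^ 2) := by
      rw [Real.sqrt_sq_eq_abs]; exact le_abs_self _
    have h2 : Real.sqrt ((u ⬝ᵥ v) ^ 2) ≤ Real.sqrt ((u ⬝ᵥ u) * (v ⬝ᵥ v)) :=
      Real.sqrt_le_sqrt (dot_cauchy u v)
    rw [Real.sqrt_mul (dot_self_nonneg u)] at h2
    linarith
  have hexp : (u + v) ⬝ᵥ (u + v) = u ⬝ᵥ u + 2 * (u ⬝ᵥ v) + v ⬝ᵥ v := by
    simp only [dotProduct_add, add_dotProduct]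
    rw [dotProduct_comm v u]; ring
  unfold euclNorm
  rw [hexp]
  have hle : u ⬝ᵥ u + 2 * (u ⬝ᵥ v) + v ⬝ᵥ v ≤
      (Real.sqrt (u ⬝ᵥ u) + Real.sqrt (v ⬝ᵥ v)) ^ 2 := by
    have h1 : Real.sqrt (u ⬝ᵥ u) ^ 2 = u ⬝ᵥ u := Real.sq_sqrt (dot_self_nonneg u)
    have h2 : Real.sqrt (v ⬝ᵥ v) ^ 2 = v ⬝ᵥ v := Real.sq_sqrt (dot_self_nonneg v)
    nlinarith [hc]
  calc Real.sqrt (u ⬝ᵥ u + 2 * (u ⬝ᵥ v) + v ⬝ᵥ v)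
      ≤ Real.sqrt ((Real.sqrt (u ⬝ᵥ u) + Real.sqrt (v ⬝ᵥ v)) ^ 2) := Real.sqrt_le_sqrt hle
    _ = Real.sqrt (u ⬝ᵥ u) + Real.sqrt (v ⬝ᵥ v) :=
        Real.sqrt_sq (by positivity)

lemma euclNorm_sub_le {n : Type*} [Fintype n] (u v : n → ℝ) :
    euclNorm (u - v) ≤ euclNorm u + euclNorm v := by
  have hneg : euclNorm (-v) = euclNorm v := by
    unfold euclNorm; simp
  have := euclNorm_add_le u (-v)
  rw [hneg] at this
  simpa [sub_eq_add_neg] using this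

/-- For a symmetric PSD matrix whose quadratic form is bounded by `Λ‖x‖²`,
every vector satisfies `‖Mx‖ ≤ Λ‖x‖`. -/
lemma psd_mulVec_norm_le {n : Type*} [Fintype n] {M : Matrix n n ℝ} (hsymm : Mᵀ = M)
    (hpsd : ∀ z : n → ℝ, 0 ≤ z ⬝ᵥ (M *ᵥ z)) {Λ : ℝ} (hΛ : 0 ≤ Λ)
    (hub : ∀ z : n → ℝ, z ⬝ᵥ (M *ᵥ z) ≤ Λ * (z ⬝ᵥ z)) (x : n → ℝ) :
    euclNorm (M *ᵥ x) ≤ Λ * euclNorm x := by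
  set y := M *ᵥ x with hy
  have h1 : (x ⬝ᵥ (M *ᵥ y)) ^ 2 ≤ (x ⬝ᵥ (M *ᵥ x)) * (y ⬝ᵥ (M *ᵥ y)) :=
    psd_cauchy hsymm hpsd x y
  have h2 : x ⬝ᵥ (M *ᵥ y) = y ⬝ᵥ y := by
    rw [dot_symm_swap hsymm x y, ← hy]
  rw [h2] at h1
  have hkey : y ⬝ᵥ y ≤ Λ ^ 2 * (x ⬝ᵥ x) := by
    rcases lt_or_eq_of_le (dot_self_nonneg y) with hpos | hzero
    · have hux := hub x
      have huy := hub y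
      have hpx := hpsd x
      have hpy := hpsd y
      nlinarith [h1, hux, huy, hpx, hpy, hpos, dot_self_nonneg x]
    · rw [← hzero]; exact mul_nonneg (sq_nonneg _) (dot_self_nonneg x)
  unfold euclNorm
  calc Real.sqrt (y ⬝ᵥ y) ≤ Real.sqrt (Λ ^ 2 * (x ⬝ᵥ x)) := Real.sqrt_le_sqrt hkey
    _ = Λ * Real.sqrt (x ⬝ᵥ x) := by
        rw [Real.sqrt_mul (sq_nonneg Λ), Real.sqrt_sq hΛ]

lemma opNorm2_nonneg {m n : Type*} [Fintype m] [Fintype n] (M : Matrix m n ℝ) :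
    0 ≤ opNorm2 M := by
  apply Real.sSup_nonneg
  rintro t ⟨x, hx, rfl⟩
  exact euclNorm_nonneg _

lemma opNorm2_le {m n : Type*} [Fintype m] [Fintype n] {M : Matrix m n ℝ} {K : ℝ}
    (hK : 0 ≤ K) (h : ∀ x : n → ℝ, euclNorm x = 1 → euclNorm (M *ᵥ x) ≤ K) :
    opNorm2 M ≤ K := by
  apply Real.sSup_le _ hK
  rintro t ⟨x, hx, rfl⟩
  exact h x hx

lemma le_opNorm2 {m n : Type*} [Fintype m] [Fintype n] {M : Matrix m n ℝ} {K : ℝ}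
    (h : ∀ x : n → ℝ, euclNorm x = 1 → euclNorm (M *ᵥ x) ≤ K) {x : n → ℝ}
    (hx : euclNorm x = 1) : euclNorm (M *ᵥ x) ≤ opNorm2 M := by
  apply le_csSup
  · exact ⟨K, by rintro t ⟨z, hz, rfl⟩; exact h z hz⟩
  · exact ⟨x, hx, rfl⟩

/-- For a symmetric positive definite `H = [[A,B],[Bᵀ,C]]` with `xᵀHx ≤ Λ‖x‖²`,
and Schur complement `S = C − Bᵀ·A⁻¹·B`, one has
`‖Bᵀ·A⁻¹·B‖₂ ≤ ‖C‖₂ + ‖S‖₂ ≤ 2Λ`. -/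
theorem schur_complement_norm_bound {r s : ℕ}
    (A : Matrix (Fin r) (Fin r) ℝ) (B : Matrix (Fin r) (Fin s) ℝ)
    (C : Matrix (Fin s) (Fin s) ℝ)
    (hAsymm : A.IsSymm) (hCsymm : C.IsSymm)
    (Lam : ℝ) (hLam : 0 < Lam)
    (hH : (fromBlocks A B Bᵀ C).PosDef)
    (hhi : ∀ x : Fin r ⊕ Fin s → ℝ,
      x ⬝ᵥ (fromBlocks A B Bᵀ C *ᵥ x) ≤ Lam * (x ⬝ᵥ x)) :
    opNorm2 (Bᵀ * A⁻¹ * B) ≤ opNorm2 C + opNorm2 (C - Bᵀ * A⁻¹ * B) ∧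
    opNorm2 C + opNorm2 (C - Bᵀ * A⁻¹ * B) ≤ 2 * Lam := by
  have hBH : Bᴴ = Bᵀ := conjTranspose_eq_transpose_of_trivial B
  set P := Bᵀ * A⁻¹ * B with hPdef
  set S := C - P with hSdef
  -- A is positive definite
  have hA : A.PosDef := by
    refine PosDef.of_dotProduct_mulVec_pos (by rw [IsHermitian, conjTranspose_eq_transpose_of_trivial]; exact hAsymm) ?_
    intro x hx
    have hne : (Sum.elim x 0 : Fin r ⊕ Fin s → ℝ) ≠ 0 := by
      intro h
      apply hx
      funext i
      have := congrFun h (Sum.inl i)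
      simpa using this
    have := hH.dotProduct_mulVec_pos hne
    simpa [fromBlocks_mulVec, sumElim_dotProduct_sumElim] using this
  haveI : Invertible A := hA.isUnit.invertible
  -- S is positive semidefinite
  have hS : S.PosSemidef := by
    have h1 : (fromBlocks A B Bᴴ C).PosSemidef := by rw [hBH]; exact hH.posSemidef
    have := (PosDef.fromBlocks₁₁ B C hA).mp h1
    rwa [hBH] at this
  -- P is positive semidefinite
  have hP : P.PosSemidef := by
    have := (hA.inv.posSemidef).conjTranspose_mul_mul_same B
    rwa [hBH] at this
  -- quadratic form facts (over ℝ, star is trivial)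
  have hPform : ∀ x : Fin s → ℝ, 0 ≤ x ⬝ᵥ (P *ᵥ x) := fun x => by
    simpa using hP.dotProduct_mulVec_nonneg x
  have hSform : ∀ x : Fin s → ℝ, 0 ≤ x ⬝ᵥ (S *ᵥ x) := fun x => by
    simpa using hS.dotProduct_mulVec_nonneg x
  have hCsub : ∀ x : Fin s → ℝ, x ⬝ᵥ (C *ᵥ x) = x ⬝ᵥ (S *ᵥ x) + x ⬝ᵥ (P *ᵥ x) := by
    intro x
    rw [hSdef, sub_mulVec, dotProduct_sub]
    ring
  have hCform : ∀ x : Fin s → ℝ, 0 ≤ x ⬝ᵥ (C *ᵥ x) := fun x => by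
    rw [hCsub x]; exact add_nonneg (hSform x) (hPform x)
  have hCub : ∀ x : Fin s → ℝ, x ⬝ᵥ (C *ᵥ x) ≤ Lam * (x ⬝ᵥ x) := by
    intro x
    have := hhi (Sum.elim 0 x)
    simpa [fromBlocks_mulVec, sumElim_dotProduct_sumElim] using this
  have hSub : ∀ x : Fin s → ℝ, x ⬝ᵥ (S *ᵥ x) ≤ Lam * (x ⬝ᵥ x) := by
    intro x
    have := hCub x
    have := hPform x
    have := hCsub x
    linarith
  have hPub : ∀ x : Fin s → ℝ, x ⬝ᵥ (P *ᵥ x) ≤ Lam * (x ⬝ᵥ x) := by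
    intro x
    have := hCub x
    have := hSform x
    have := hCsub x
    linarith
  -- symmetry facts
  have hCsymm' : Cᵀ = C := hCsymm
  have hPsymm : Pᵀ = P := by
    rw [hPdef]
    rw [transpose_mul, transpose_mul, transpose_transpose, transpose_nonsing_inv,
      hAsymm.eq, Matrix.mul_assoc]
  have hSsymm : Sᵀ = S := by
    rw [hSdef, transpose_sub, hCsymm', hPsymm]
  have hLam0 : (0 : ℝ) ≤ Lam := le_of_lt hLam
  -- pointwise norm bounds
  have hCnorm : ∀ x : Fin s → ℝ, euclNorm (C *ᵥ x) ≤ Lam * euclNorm x :=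
    psd_mulVec_norm_le hCsymm' hCform hLam0 hCub
  have hSnorm : ∀ x : Fin s → ℝ, euclNorm (S *ᵥ x) ≤ Lam * euclNorm x :=
    psd_mulVec_norm_le hSsymm hSform hLam0 hSub
  have hCunit : ∀ x : Fin s → ℝ, euclNorm x = 1 → euclNorm (C *ᵥ x) ≤ Lam := by
    intro x hx; have := hCnorm x; rwa [hx, mul_one] at this
  have hSunit : ∀ x : Fin s → ℝ, euclNorm x = 1 → euclNorm (S *ᵥ x) ≤ Lam := by
    intro x hx; have := hSnorm x; rwa [hx, mul_one] at this
  have hOC : opNorm2 C ≤ Lam := opNorm2_le hLam0 hCunit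
  have hOS : opNorm2 S ≤ Lam := opNorm2_le hLam0 hSunit
  constructor
  · -- first inequality
    apply Real.sSup_le
    · rintro t ⟨x, hx, rfl⟩
      have hPx : P *ᵥ x = C *ᵥ x - S *ᵥ x := by
        rw [← sub_mulVec, hSdef, sub_sub_cancel]
      calc euclNorm (P *ᵥ x) = euclNorm (C *ᵥ x - S *ᵥ x) := by rw [hPx]
        _ ≤ euclNorm (C *ᵥ x) + euclNorm (S *ᵥ x) := euclNorm_sub_le _ _
        _ ≤ opNorm2 C + opNorm2 S :=
            add_le_add (le_opNorm2 hCunit hx) (le_opNorm2 hSunit hx)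
    · exact add_nonneg (opNorm2_nonneg C) (opNorm2_nonneg S)
  · linarith
end

section
/- In the RURV setting (exact arithmetic), the leading r×r block of R satisfies σ_min(R(1:r,1:r)) ≥ f·σ_r, where f = σ_min(X₁₁) and X₁₁ = X(1:r,1:r) is the leading r×r block of X = Qᵀ·Vᵀ. -/
open Matrix

/-- The smallest singular value of a real matrix: the infimum of `‖M·x‖₂` over
Euclidean-unit vectors `x`. -/
noncomputable def sigmaMin {m n : Type*} [Fintype m] [Fintype n]
    (M : Matrix m n ℝ) : ℝ :=
  sInf {t | ∃ x : n → ℝ, euclNorm x = 1 ∧ t = euclNorm (M *ᵥ x)}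

/-!
Write `R = W Σ X` with `W = Uᵀ P` orthogonal. For `y ∈ ℝʳ` let `x = Function.extend e y 0` be `y`
padded with zeros, `e = Fin.castLE`. As `R` is upper triangular, `R x` is `R₁₁ y` padded with
zeros, so `‖R₁₁ y‖ = ‖R x‖ = ‖Σ X x‖ ≥ σ_r ‖(X x)(1:r)‖ = σ_r ‖X₁₁ y‖`, since `σ_i ≥ σ_r` for
`i ≤ r`. Taking the infimum over unit `y` gives the bound.
-/

section EuclNorm

variable {ι κ : Type*} [Fintype ι] [Fintype κ]

lemma euclNorm_nonneg_s12 (v : ι → ℝ) : 0 ≤ euclNorm v :=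
  Real.sqrt_nonneg _

lemma mul_euclNorm_le_euclNorm {a : ℝ} (ha : 0 ≤ a) {v : ι → ℝ} {w : κ → ℝ}
    (h : a ^ 2 * (v ⬝ᵥ v) ≤ w ⬝ᵥ w) : a * euclNorm v ≤ euclNorm w := by
  calc a * euclNorm v = Real.sqrt (a ^ 2 * (v ⬝ᵥ v)) := by
        rw [euclNorm, Real.sqrt_mul' _ (by simpa using dotProduct_self_star_nonneg v), Real.sqrt_sq ha]
    _ ≤ euclNorm w := Real.sqrt_le_sqrt h

lemma sigmaMin_le {M : Matrix κ ι ℝ} {x : ι → ℝ} (hx : euclNorm x = 1) :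
    sigmaMin M ≤ euclNorm (M *ᵥ x) :=
  csInf_le ⟨0, fun _ ⟨_, _, ht⟩ => ht ▸ euclNorm_nonneg_s12 _⟩ ⟨x, hx, rfl⟩

lemma sigmaMin_eq_zero_of_not_exists {M : Matrix κ ι ℝ} (h : ¬∃ x : ι → ℝ, euclNorm x = 1) :
    sigmaMin M = 0 :=
  (congrArg sInf (Set.eq_empty_of_forall_notMem fun _ hx => h (hx.imp fun _ => And.left))).trans
    Real.sInf_empty

lemma sigmaMin_mul_le_sigmaMin {κ' : Type*} [Fintype κ'] {M : Matrix κ ι ℝ}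
    {N : Matrix κ' ι ℝ} {a : ℝ} (ha : 0 ≤ a)
    (h : ∀ x, a * euclNorm (N *ᵥ x) ≤ euclNorm (M *ᵥ x)) :
    sigmaMin N * a ≤ sigmaMin M := by
  by_cases hS : ∃ x : ι → ℝ, euclNorm x = 1
  · obtain ⟨x₀, hx₀⟩ := hS
    refine le_csInf ⟨_, x₀, hx₀, rfl⟩ ?_
    rintro t ⟨x, hx, rfl⟩
    calc sigmaMin N * a ≤ euclNorm (N *ᵥ x) * a := mul_le_mul_of_nonneg_right (sigmaMin_le hx) ha
      _ ≤ euclNorm (M *ᵥ x) := by rw [mul_comm]; exact h x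
  · rw [sigmaMin_eq_zero_of_not_exists hS, sigmaMin_eq_zero_of_not_exists hS, zero_mul]

end EuclNorm

section Restriction

variable {ι κ : Type*} [Fintype ι] [Fintype κ] {e : ι → κ}

lemma dotProduct_self_comp_eq (he : e.Injective) {v : κ → ℝ}
    (hv : ∀ j ∉ Set.range e, v j = 0) : (v ∘ e) ⬝ᵥ (v ∘ e) = v ⬝ᵥ v :=
  Fintype.sum_of_injective e he _ _ (fun j hj => by simp [hv j hj]) fun _ => rfl

lemma dotProduct_self_comp_le (he : e.Injective) (v : κ → ℝ) :
    (v ∘ e) ⬝ᵥ (v ∘ e) ≤ v ⬝ᵥ v := by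
  calc (v ∘ e) ⬝ᵥ (v ∘ e) = ∑ j ∈ Finset.univ.map ⟨e, he⟩, v j * v j := by
        rw [Finset.sum_map]; rfl
    _ ≤ v ⬝ᵥ v := Finset.sum_le_univ_sum_of_nonneg fun j => mul_self_nonneg (v j)

lemma mulVec_extend_comp {ι' κ' : Type*} (M : Matrix κ' κ ℝ) (e' : ι' → κ')
    (he : e.Injective) (y : ι → ℝ) :
    (M *ᵥ Function.extend e y 0) ∘ e' = M.submatrix e' e *ᵥ y := by
  ext i
  refine (Fintype.sum_of_injective e he _ _ (fun j hj => ?_) fun k => ?_).symm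
  · rw [Function.extend_apply' _ _ _ fun ⟨k, hk⟩ => hj ⟨k, hk⟩, Pi.zero_apply, mul_zero]
  · rw [he.extend_apply]; rfl

lemma sq_mul_dotProduct_le_diagonal_mulVec {σ : κ → ℝ} [DecidableEq κ] {c : ℝ} (hc : 0 ≤ c)
    (hσ : ∀ i, c ≤ σ (e i)) (he : e.Injective) (v : κ → ℝ) :
    c ^ 2 * ((v ∘ e) ⬝ᵥ (v ∘ e)) ≤ (diagonal σ *ᵥ v) ⬝ᵥ (diagonal σ *ᵥ v) := by
  calc c ^ 2 * ((v ∘ e) ⬝ᵥ (v ∘ e)) ≤ ((diagonal σ *ᵥ v) ∘ e) ⬝ᵥ ((diagonal σ *ᵥ v) ∘ e) := by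
        rw [dotProduct, Finset.mul_sum]
        refine Finset.sum_le_sum fun i _ => ?_
        simp only [Function.comp_apply, mulVec_diagonal]
        have hσ2 := mul_self_le_mul_self hc (hσ i)
        nlinarith [mul_self_nonneg (v (e i))]
    _ ≤ _ := dotProduct_self_comp_le he _

end Restriction

lemma dotProduct_mulVec_self_of_orthonormal {m n : Type*} [Fintype m] [Fintype n] [DecidableEq n]
    {W : Matrix m n ℝ} (hW : Wᵀ * W = 1) (z : n → ℝ) :
    (W *ᵥ z) ⬝ᵥ (W *ᵥ z) = z ⬝ᵥ z := by
  rw [dotProduct_mulVec, ← vecMul_transpose, vecMul_vecMul, hW, vecMul_one]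

lemma mulVec_extend_castLE_eq_zero {n r : ℕ} (h : r ≤ n) {R : Matrix (Fin n) (Fin n) ℝ}
    (hR : R.BlockTriangular id) (y : Fin r → ℝ) {i : Fin n} (hi : r ≤ i) :
    (R *ᵥ Function.extend (Fin.castLE h) y 0) i = 0 := by
  rw [mulVec, dotProduct]
  refine Finset.sum_eq_zero fun j _ => ?_
  by_cases hj : ∃ k, Fin.castLE h k = j
  · obtain ⟨k, rfl⟩ := hj
    have hki : Fin.castLE h k < i := Fin.lt_def.2 (lt_of_lt_of_le k.2 hi)
    have hzero : R i (Fin.castLE h k) = 0 := hR hki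
    rw [hzero, zero_mul]
  · rw [Function.extend_apply' _ _ _ hj, Pi.zero_apply, mul_zero]

/-- RURV, exact arithmetic: with `A = P·Σ·Qᵀ` an SVD, `V` orthogonal,
`X = Qᵀ·Vᵀ`, and `A·Vᵀ = U·R` a QR decomposition, the leading `r×r` block of `R`
satisfies `σ_min(R(1:r,1:r)) ≥ f·σ_r` where `f = σ_min(X(1:r,1:r))`. -/
theorem rurv_leading_block_lower_bound {n : ℕ} (r : ℕ) (hrn : r < n)
    (A P Q V U R : Matrix (Fin n) (Fin n) ℝ) (σ : Fin n → ℝ)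
    (hP : Pᵀ * P = 1) (hU : Uᵀ * U = 1)
    (hσdec : Antitone σ) (hσ0 : ∀ i, 0 ≤ σ i)
    (hA : A = P * diagonal σ * Qᵀ)
    (hRtri : R.BlockTriangular id)
    (hQR : A * Vᵀ = U * R) :
    sigmaMin ((Qᵀ * Vᵀ).submatrix (Fin.castLE hrn.le) (Fin.castLE hrn.le)) *
        σ ⟨r - 1, by omega⟩ ≤
      sigmaMin (R.submatrix (Fin.castLE hrn.le) (Fin.castLE hrn.le)) := by
  set e := Fin.castLE hrn.le
  have he : e.Injective := Fin.castLE_injective _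
  set W := Uᵀ * P
  have hW : Wᵀ * W = 1 := by
    rw [transpose_mul, transpose_transpose, Matrix.mul_assoc, ← Matrix.mul_assoc U,
      mul_eq_one_comm.mp hU, Matrix.one_mul, hP]
  have hR : R = W * (diagonal σ * (Qᵀ * Vᵀ)) :=
    calc R = Uᵀ * (U * R) := by rw [← Matrix.mul_assoc, hU, Matrix.one_mul]
      _ = W * (diagonal σ * (Qᵀ * Vᵀ)) := by rw [← hQR, hA]; simp only [W, Matrix.mul_assoc]
  have hσr : ∀ i, σ ⟨r - 1, by omega⟩ ≤ σ (e i) := fun i => hσdec (by simp [e, Fin.le_def]; omega)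
  refine sigmaMin_mul_le_sigmaMin (hσ0 _) fun y => mul_euclNorm_le_euclNorm (hσ0 _) ?_
  have hRx_tail : ∀ j ∉ Set.range e, (R *ᵥ Function.extend e y 0) j = 0 :=
    fun j hj => mulVec_extend_castLE_eq_zero _ hRtri y (not_lt.1 fun hjr => hj ⟨⟨j, hjr⟩, rfl⟩)
  have hRy : (R.submatrix e e *ᵥ y) ⬝ᵥ (R.submatrix e e *ᵥ y) =
      (diagonal σ *ᵥ (Qᵀ * Vᵀ) *ᵥ Function.extend e y 0) ⬝ᵥ
        (diagonal σ *ᵥ (Qᵀ * Vᵀ) *ᵥ Function.extend e y 0) := by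
    rw [← mulVec_extend_comp _ _ he, dotProduct_self_comp_eq he hRx_tail, hR, ← mulVec_mulVec,
      dotProduct_mulVec_self_of_orthonormal hW, mulVec_mulVec]
  rw [hRy, ← mulVec_extend_comp _ _ he]
  exact sq_mul_dotProduct_le_diagonal_mulVec (hσ0 _) hσr he _
end

section
/- In the RURV setting (exact arithmetic), the leading r×r block of R satisfies σ_min(R(1:r,1:r))² ≤ σ_r² + σ_{r+1}²; in particular σ_min(R(1:r,1:r)) ≤ √2·σ_r. -/
open Matrix

/-!
The bound holds even in the sharper form `σ_min(R₁₁) ≤ σ_r` (which is `σ ⟨r - 1, _⟩`, the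
indexing being 0-based), by a Courant–Fischer argument. Since `r - 1 < r`, some unit `x ∈ ℝʳ` is
such that `y = Qᵀ Vᵀ (x, 0)` vanishes in its first `r - 1` coordinates; the zero-padding `(x, 0)`
is `extend (Fin.castLE _) x 0`. As `R` is upper
triangular, `‖R₁₁ x‖ = ‖R (x, 0)‖`, and as `U` and `P` are orthogonal, `‖R (x, 0)‖ = ‖Σ y‖`.
Because `σ` is decreasing and `y` is supported on the coordinates `r, …, n`,
`‖Σ y‖ ≤ σ_r ‖y‖ = σ_r`.
-/

open Function

section ExtendByZero

variable {α l m n : Type*} [Fintype m] [Fintype n] [NonUnitalNonAssocSemiring α]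

theorem dotProduct_extend_zero {e : m → n} (he : Injective e) (f : n → α) (x : m → α) :
    f ⬝ᵥ extend e x 0 = (f ∘ e) ⬝ᵥ x :=
  (Fintype.sum_of_injective e he _ _
    (fun j hj => by rw [extend_apply' _ _ _ hj, Pi.zero_apply, mul_zero])
    (fun i => by rw [he.extend_apply]; rfl)).symm

theorem mulVec_extend_zero {e : m → n} (he : Injective e) (M : Matrix l n α) (x : m → α) :
    M *ᵥ extend e x 0 = M.submatrix id e *ᵥ x :=
  funext fun i => dotProduct_extend_zero he (M i) x

theorem extend_zero_dotProduct_self {e : m → n} (he : Injective e) (x : m → α) :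
    extend e x 0 ⬝ᵥ extend e x 0 = x ⬝ᵥ x := by
  rw [dotProduct_extend_zero he, extend_comp he]

theorem dotProduct_self_eq_of_eq_zero_of_notMem_range {e : m → n} (he : Injective e)
    {w : n → α} (hw : ∀ j ∉ Set.range e, w j = 0) :
    w ⬝ᵥ w = (w ∘ e) ⬝ᵥ (w ∘ e) :=
  (Fintype.sum_of_injective e he _ _ (fun j hj => by rw [hw j hj, mul_zero])
    (fun _ => rfl)).symm

end ExtendByZero

theorem Matrix.BlockTriangular.mulVec_extend_castLE_dotProduct_self {α : Type*}
    [NonUnitalNonAssocSemiring α] {n r : ℕ} {R : Matrix (Fin n) (Fin n) α}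
    (hR : R.BlockTriangular id) (h : r ≤ n) (x : Fin r → α) :
    (R *ᵥ extend (Fin.castLE h) x 0) ⬝ᵥ (R *ᵥ extend (Fin.castLE h) x 0) =
      (R.submatrix (Fin.castLE h) (Fin.castLE h) *ᵥ x) ⬝ᵥ
        (R.submatrix (Fin.castLE h) (Fin.castLE h) *ᵥ x) := by
  rw [mulVec_extend_zero (Fin.castLE_injective h),
    dotProduct_self_eq_of_eq_zero_of_notMem_range (Fin.castLE_injective h)]
  · rfl
  intro j hj
  rw [Fin.range_castLE, Set.mem_ofPred_eq, not_lt] at hj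
  simp only [mulVec, dotProduct, submatrix_apply, id]
  refine Fintype.sum_eq_zero _ fun i => ?_
  exact mul_eq_zero_of_left (hR (show Fin.castLE h i < j from i.isLt.trans_le hj)) _

theorem dotProduct_self_mulVec_of_transpose_mul_eq_one {α n : Type*} [Fintype n] [DecidableEq n]
    [CommSemiring α] {M : Matrix n n α} (hM : Mᵀ * M = 1) (v : n → α) :
    (M *ᵥ v) ⬝ᵥ (M *ᵥ v) = v ⬝ᵥ v := by
  rw [dotProduct_mulVec, ← mulVec_transpose, mulVec_mulVec, hM, one_mulVec]

theorem diagonal_mulVec_dotProduct_self_le {ι : Type*} [Fintype ι] [LinearOrder ι]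
    [DecidableEq ι] {σ : ι → ℝ} (hσ : Antitone σ) (hσ0 : ∀ i, 0 ≤ σ i) {k : ι} {y : ι → ℝ}
    (hy : ∀ j < k, y j = 0) :
    (diagonal σ *ᵥ y) ⬝ᵥ (diagonal σ *ᵥ y) ≤ σ k ^ 2 * (y ⬝ᵥ y) := by
  simp only [dotProduct, mulVec_diagonal, Finset.mul_sum]
  refine Finset.sum_le_sum fun j _ => ?_
  rcases lt_or_ge j k with hj | hj
  · simp [hy j hj]
  · have hσj : σ j ^ 2 ≤ σ k ^ 2 := pow_le_pow_left₀ (hσ0 j) (hσ hj) 2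
    nlinarith [mul_self_nonneg (y j)]

section EuclideanNorm

variable {m n : Type*} [Fintype m] [Fintype n]

theorem euclNorm_sq (v : n → ℝ) : euclNorm v ^ 2 = v ⬝ᵥ v :=
  Real.sq_sqrt (Fintype.sum_nonneg fun i => mul_self_nonneg (v i))

theorem euclNorm_smul (c : ℝ) (v : n → ℝ) : euclNorm (c • v) = |c| * euclNorm v := by
  rw [euclNorm, euclNorm, smul_dotProduct, dotProduct_smul, smul_eq_mul, smul_eq_mul,
    ← mul_assoc, Real.sqrt_mul (mul_self_nonneg c), Real.sqrt_mul_self_eq_abs]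

theorem exists_euclNorm_eq_one_mulVec_eq_zero (C : Matrix m n ℝ)
    (h : Fintype.card m < Fintype.card n) : ∃ x, euclNorm x = 1 ∧ C *ᵥ x = 0 := by
  obtain ⟨z, hz, hz0⟩ :=
    (Submodule.ne_bot_iff _).mp (C.mulVecLin.ker_ne_bot_of_finrank_lt (by simpa using h))
  have hpos : 0 < euclNorm z :=
    Real.sqrt_pos.mpr <| (Fintype.sum_nonneg fun i => mul_self_nonneg (z i)).lt_of_ne'
      (dotProduct_self_eq_zero.not.mpr hz0)
  refine ⟨(euclNorm z)⁻¹ • z, ?_, ?_⟩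
  · rw [euclNorm_smul, abs_of_pos (inv_pos.mpr hpos), inv_mul_cancel₀ hpos.ne']
  · rw [mulVec_smul, show C *ᵥ z = 0 from hz, smul_zero]

theorem sigmaMin_nonneg (M : Matrix m n ℝ) : 0 ≤ sigmaMin M :=
  Real.sInf_nonneg (by rintro _ ⟨x, -, rfl⟩; exact Real.sqrt_nonneg _)

theorem sigmaMin_sq_le {M : Matrix m n ℝ} {x : n → ℝ} (hx : euclNorm x = 1) :
    sigmaMin M ^ 2 ≤ (M *ᵥ x) ⬝ᵥ (M *ᵥ x) := by
  have hle : sigmaMin M ≤ euclNorm (M *ᵥ x) :=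
    csInf_le ⟨0, by rintro _ ⟨w, -, rfl⟩; exact Real.sqrt_nonneg _⟩ ⟨x, hx, rfl⟩
  rw [← euclNorm_sq]
  exact pow_le_pow_left₀ (sigmaMin_nonneg M) hle 2

end EuclideanNorm

theorem sigmaMin_leading_block_le_of_rurv {n r : ℕ} (hr1 : 1 ≤ r) (hrn : r ≤ n)
    {P Q V U R : Matrix (Fin n) (Fin n) ℝ} {σ : Fin n → ℝ}
    (hP : Pᵀ * P = 1) (hQ : Qᵀ * Q = 1) (hV : Vᵀ * V = 1) (hU : Uᵀ * U = 1)
    (hσdec : Antitone σ) (hσ0 : ∀ i, 0 ≤ σ i) (hRtri : R.BlockTriangular id)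
    (hQR : P * diagonal σ * Qᵀ * Vᵀ = U * R) :
    sigmaMin (R.submatrix (Fin.castLE hrn) (Fin.castLE hrn)) ≤ σ ⟨r - 1, by omega⟩ := by
  set e := Fin.castLE hrn
  have he : Injective e := Fin.castLE_injective _
  have hQt : Qᵀᵀ * Qᵀ = 1 := by rw [transpose_transpose]; exact mul_eq_one_comm.mp hQ
  have hVt : Vᵀᵀ * Vᵀ = 1 := by rw [transpose_transpose]; exact mul_eq_one_comm.mp hV
  obtain ⟨x, hx, hker⟩ := exists_euclNorm_eq_one_mulVec_eq_zero
    ((Qᵀ * Vᵀ).submatrix (Fin.castLE (by omega : r - 1 ≤ n)) e) (by simp; omega)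
  set y := Qᵀ *ᵥ (Vᵀ *ᵥ extend e x 0)
  have hy0 : ∀ j < (⟨r - 1, by omega⟩ : Fin n), y j = 0 := fun j hj => by
    simp only [y, mulVec_mulVec, mulVec_extend_zero he]
    exact congrFun hker ⟨j, hj⟩
  have hyy : y ⬝ᵥ y = 1 := by
    rw [dotProduct_self_mulVec_of_transpose_mul_eq_one hQt,
      dotProduct_self_mulVec_of_transpose_mul_eq_one hVt,
      extend_zero_dotProduct_self he, ← euclNorm_sq, hx, one_pow]
  have hURx : U *ᵥ (R *ᵥ extend e x 0) = P *ᵥ (diagonal σ *ᵥ y) := by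
    simp only [y, mulVec_mulVec, ← Matrix.mul_assoc, ← hQR]
  have hsq : sigmaMin (R.submatrix e e) ^ 2 ≤ σ ⟨r - 1, by omega⟩ ^ 2 := calc
    _ ≤ (R.submatrix e e *ᵥ x) ⬝ᵥ (R.submatrix e e *ᵥ x) := sigmaMin_sq_le hx
    _ = (R *ᵥ extend e x 0) ⬝ᵥ (R *ᵥ extend e x 0) :=
      (hRtri.mulVec_extend_castLE_dotProduct_self _ x).symm
    _ = (diagonal σ *ᵥ y) ⬝ᵥ (diagonal σ *ᵥ y) := by
      rw [← dotProduct_self_mulVec_of_transpose_mul_eq_one hU, hURx,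
        dotProduct_self_mulVec_of_transpose_mul_eq_one hP]
    _ ≤ σ ⟨r - 1, by omega⟩ ^ 2 * (y ⬝ᵥ y) := diagonal_mulVec_dotProduct_self_le hσdec hσ0 hy0
    _ = σ ⟨r - 1, by omega⟩ ^ 2 := by rw [hyy, mul_one]
  exact (pow_le_pow_iff_left₀ (sigmaMin_nonneg _) (hσ0 _) two_ne_zero).mp hsq

/-- RURV, exact arithmetic: with `A = P·Σ·Qᵀ` an SVD, `V` orthogonal and
`A·Vᵀ = U·R` a QR decomposition, the leading `r×r` block of `R` satisfies
`σ_min(R(1:r,1:r))² ≤ σ_r² + σ_{r+1}²`, so `σ_min(R(1:r,1:r)) ≤ √2·σ_r`. -/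
theorem rurv_leading_block_upper_bound {n : ℕ} (r : ℕ) (hr1 : 1 ≤ r) (hrn : r < n)
    (A P Q V U R : Matrix (Fin n) (Fin n) ℝ) (σ : Fin n → ℝ)
    (hP : Pᵀ * P = 1) (hQ : Qᵀ * Q = 1) (hV : Vᵀ * V = 1) (hU : Uᵀ * U = 1)
    (hσdec : Antitone σ) (hσ0 : ∀ i, 0 ≤ σ i)
    (hA : A = P * diagonal σ * Qᵀ)
    (hRtri : R.BlockTriangular id)
    (hQR : A * Vᵀ = U * R) :
    sigmaMin (R.submatrix (Fin.castLE hrn.le) (Fin.castLE hrn.le)) ^ 2 ≤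
        σ ⟨r - 1, by omega⟩ ^ 2 + σ ⟨r, hrn⟩ ^ 2 ∧
    sigmaMin (R.submatrix (Fin.castLE hrn.le) (Fin.castLE hrn.le)) ≤
        Real.sqrt 2 * σ ⟨r - 1, by omega⟩ := by
  have hle := sigmaMin_leading_block_le_of_rurv hr1 hrn.le hP hQ hV hU hσdec hσ0 hRtri
    (hA ▸ hQR)
  exact ⟨(pow_le_pow_left₀ (sigmaMin_nonneg _) hle 2).trans
      (le_add_of_nonneg_right (sq_nonneg _)),
    hle.trans (le_mul_of_one_le_left (hσ0 _) (Real.one_le_sqrt.mpr one_le_two))⟩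
end

section
/- Let Y = [Y₁, Y₂] be an n×n real matrix, where Y₁ consists of the first r columns (1 ≤ r < n) and has full column rank r (equivalently, Y₁ᵀ·Y₁ is invertible). Let Y = U·R be a QR factorization with U orthogonal and R upper triangular. Then σ_max(R(r+1:n, r+1:n)) = ‖(I − Y₁·(Y₁ᵀ·Y₁)⁻¹·Y₁ᵀ)·Y₂‖₂; that is, the largest singular value of the trailing block of R equals the ℓ² operator norm of the projection of Y₂ onto the orthogonal complement of the column space of Y₁. -/
open Matrix

lemma sum_split_aux {n r : ℕ} (h : r ≤ n) (f : Fin n → ℝ) :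
    ∑ i, f i = (∑ j : Fin r, f (Fin.castLE h j)) +
      ∑ j : Fin (n - r), f ⟨r + j.val, by have := j.isLt; omega⟩ := by
  have hrn : r + (n - r) = n := by omega
  have := Equiv.sum_comp ((finSumFinEquiv).trans (finCongr hrn)) f
  rw [← this, Fintype.sum_sum_type]
  congr 1


/-- The largest singular value (ℓ² operator norm) of a real matrix: the supremum
of `‖M·x‖₂` over Euclidean-unit vectors `x`. -/
noncomputable def sigmaMax {m n : Type*} [Fintype m] [Fintype n]
    (M : Matrix m n ℝ) : ℝ :=
  sSup {t | ∃ x : n → ℝ, euclNorm x = 1 ∧ t = euclNorm (M *ᵥ x)}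

/-- Let `Y = [Y₁, Y₂]` with `Y₁` its first `r` columns of full column rank, and
let `Y = U·R` be a QR factorization (`U` orthogonal, `R` upper triangular).
Then `σ_max(R(r+1:n,r+1:n)) = ‖(I − Y₁(Y₁ᵀY₁)⁻¹Y₁ᵀ)·Y₂‖₂`, the norm of the
projection of `Y₂` onto the orthogonal complement of the column space of `Y₁`. -/
theorem qr_trailing_block_equals_projection_norm {n : ℕ} (r : ℕ)
    (hr1 : 1 ≤ r) (hrn : r < n)
    (Y U R : Matrix (Fin n) (Fin n) ℝ)
    (hU : Uᵀ * U = 1) (hRtri : R.BlockTriangular id) (hQR : Y = U * R)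
    (hY1 : IsUnit ((Y.submatrix id (Fin.castLE hrn.le))ᵀ *
      Y.submatrix id (Fin.castLE hrn.le))) :
    let Y₁ := Y.submatrix id (Fin.castLE hrn.le)
    let Y₂ := Y.submatrix id
      (fun i : Fin (n - r) => (⟨r + i.val, by have := i.isLt; omega⟩ : Fin n))
    let R22 := R.submatrix
      (fun i : Fin (n - r) => (⟨r + i.val, by have := i.isLt; omega⟩ : Fin n))
      (fun i : Fin (n - r) => (⟨r + i.val, by have := i.isLt; omega⟩ : Fin n))
    sigmaMax R22 = sigmaMax ((1 - Y₁ * (Y₁ᵀ * Y₁)⁻¹ * Y₁ᵀ) * Y₂) := by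
  intro Y₁ Y₂ R22
  set cl : Fin r → Fin n := Fin.castLE hrn.le with hcl
  set emb : Fin (n - r) → Fin n :=
    (fun i : Fin (n - r) => (⟨r + i.val, by have := i.isLt; omega⟩ : Fin n)) with hemb
  set R1 : Matrix (Fin n) (Fin r) ℝ := R.submatrix id cl with hR1
  set R2 : Matrix (Fin n) (Fin (n - r)) ℝ := R.submatrix id emb with hR2
  set A : Matrix (Fin r) (Fin r) ℝ := R.submatrix cl cl with hA
  set E : Matrix (Fin n) (Fin r) ℝ := (1 : Matrix (Fin n) (Fin n) ℝ).submatrix id cl with hE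
  have hUUt : U * Uᵀ = 1 := (mul_eq_one_comm).mp hU
  have hY1eq : Y₁ = U * R1 := by
    ext i j
    simp only [Y₁, hQR, Matrix.submatrix_apply, Matrix.mul_apply, hR1, id]
    rfl
  have hY2eq : Y₂ = U * R2 := by
    ext i j
    simp only [Y₂, hQR, Matrix.submatrix_apply, Matrix.mul_apply, hR2, id]
    rfl
  have hR1rows : ∀ (i : Fin n) (j : Fin r), r ≤ i.val → R1 i j = 0 := by
    intro i j h
    exact hRtri (show (id (cl j) : Fin n) < id i from
      Fin.lt_def.mpr (by simp only [id, cl]; simp [Fin.castLE]; omega))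
  -- E-multiplication helpers
  have hEt : ∀ {m : Type} [Fintype m] (X : Matrix (Fin n) m ℝ),
      Eᵀ * X = X.submatrix cl id := by
    intro m _ X
    ext a j
    rw [Matrix.mul_apply, Finset.sum_eq_single (cl a)]
    · simp [E, Matrix.one_apply]
    · intro i _ hi
      have : E i a = 0 := by
        simp only [E, Matrix.submatrix_apply, id]
        exact Matrix.one_apply_ne hi
      simp [this]
    · intro h; exact absurd (Finset.mem_univ _) h
  have hEmul : ∀ {m : Type} [Fintype m] (X : Matrix (Fin r) m ℝ) (i : Fin n) (j : m),
      (E * X) i j = if h : i.val < r then X ⟨i.val, h⟩ j else 0 := by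
    intro m _ X i j
    rw [Matrix.mul_apply]
    by_cases h : i.val < r
    · rw [Finset.sum_eq_single ⟨i.val, h⟩]
      · have hci : cl ⟨i.val, h⟩ = i := Fin.ext rfl
        simp [E, hci, Matrix.one_apply, h]
      · intro b _ hb
        have : E i b = 0 := by
          simp only [E, Matrix.submatrix_apply, id]
          refine Matrix.one_apply_ne fun hc => hb ?_
          exact Fin.ext (congrArg Fin.val hc).symm
        simp [this]
      · intro h'; exact absurd (Finset.mem_univ _) h'
    · rw [dif_neg h]
      apply Finset.sum_eq_zero
      intro b _
      have : E i b = 0 := by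
        simp only [E, Matrix.submatrix_apply, id]
        refine Matrix.one_apply_ne fun hc => ?_
        have h2 : (i : ℕ) = (b : ℕ) := congrArg Fin.val hc
        exact h (h2 ▸ b.isLt)
      simp [this]
  have hEA : R1 = E * A := by
    ext i j
    rw [hEmul]
    by_cases h : i.val < r
    · rw [dif_pos h]
      rfl
    · rw [dif_neg h]
      exact hR1rows i j (by omega)
  -- invertibility of A
  have hEtE : Eᵀ * E = 1 := by
    rw [hEt]
    ext a b
    simp only [Matrix.submatrix_apply, id, E]
    by_cases hab : a = b
    · subst hab; simp [Matrix.one_apply]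
    · rw [Matrix.one_apply_ne, Matrix.one_apply_ne hab]
      intro hc
      exact hab (Fin.castLE_injective hrn.le hc)
  have hYtY : Y₁ᵀ * Y₁ = Aᵀ * A := by
    rw [hY1eq, Matrix.transpose_mul, Matrix.mul_assoc, ← Matrix.mul_assoc Uᵀ U R1, hU,
      Matrix.one_mul, hEA, Matrix.transpose_mul, Matrix.mul_assoc, ← Matrix.mul_assoc Eᵀ E A,
      hEtE, Matrix.one_mul]
  have hdA : IsUnit A.det := by
    have h1 : IsUnit (Aᵀ * A).det := by
      rw [← hYtY]
      exact (Matrix.isUnit_iff_isUnit_det _).mp hY1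
    rw [Matrix.det_mul, Matrix.det_transpose] at h1
    exact isUnit_of_mul_isUnit_left h1
  have hdAT : IsUnit (Aᵀ).det := by rwa [Matrix.det_transpose]
  have hinv : (Y₁ᵀ * Y₁)⁻¹ = A⁻¹ * (Aᵀ)⁻¹ := by
    rw [hYtY, Matrix.mul_inv_rev]
  have hProj : Y₁ * (Y₁ᵀ * Y₁)⁻¹ * Y₁ᵀ = U * (E * (Eᵀ * Uᵀ)) := by
    rw [hinv, hY1eq, hEA, Matrix.transpose_mul, Matrix.transpose_mul]
    simp only [Matrix.mul_assoc]
    rw [← Matrix.mul_assoc (Aᵀ)⁻¹ Aᵀ, Matrix.nonsing_inv_mul _ hdAT, Matrix.one_mul,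
      ← Matrix.mul_assoc A A⁻¹, Matrix.mul_nonsing_inv _ hdA, Matrix.one_mul]
  set Z : Matrix (Fin n) (Fin (n - r)) ℝ := R2 - E * (Eᵀ * R2) with hZdef
  have hPY : (1 - Y₁ * (Y₁ᵀ * Y₁)⁻¹ * Y₁ᵀ) * Y₂ = U * Z := by
    rw [Matrix.sub_mul, Matrix.one_mul, hProj, hY2eq, hZdef, Matrix.mul_sub]
    congr 1
    simp only [Matrix.mul_assoc]
    rw [← Matrix.mul_assoc Uᵀ U, hU, Matrix.one_mul]
  have hZ : ∀ (i : Fin n) (j : Fin (n - r)),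
      Z i j = if i.val < r then 0 else R2 i j := by
    intro i j
    simp only [hZdef, Matrix.sub_apply]
    rw [hEt, hEmul]
    by_cases h : i.val < r
    · rw [dif_pos h, if_pos h, Matrix.submatrix_apply]
      have hci : cl ⟨i.val, h⟩ = i := Fin.ext rfl
      rw [hci]; simp
    · rw [dif_neg h, if_neg h, sub_zero]
  have hUnorm : ∀ v : Fin n → ℝ, euclNorm (U *ᵥ v) = euclNorm v := by
    intro v
    unfold euclNorm
    congr 1
    rw [Matrix.dotProduct_mulVec, ← Matrix.vecMul_transpose, Matrix.vecMul_vecMul, hU,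
      Matrix.vecMul_one]
  have hnorm : ∀ x : Fin (n - r) → ℝ,
      euclNorm (((1 - Y₁ * (Y₁ᵀ * Y₁)⁻¹ * Y₁ᵀ) * Y₂) *ᵥ x) = euclNorm (R22 *ᵥ x) := by
    intro x
    rw [hPY, ← Matrix.mulVec_mulVec, hUnorm]
    unfold euclNorm
    congr 1
    have hZcl : ∀ j : Fin r, (Z *ᵥ x) (cl j) = 0 := by
      intro j
      simp only [Matrix.mulVec, dotProduct]
      apply Finset.sum_eq_zero
      intro k _
      rw [hZ, if_pos (by simpa [cl, Fin.castLE] using j.isLt)]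
      ring
    have hZemb : ∀ j : Fin (n - r), (Z *ᵥ x) (emb j) = (R22 *ᵥ x) j := by
      intro j
      simp only [Matrix.mulVec, dotProduct]
      apply Finset.sum_congr rfl
      intro k _
      rw [hZ, if_neg (by simp [emb])]
      rfl
    show (Z *ᵥ x) ⬝ᵥ (Z *ᵥ x) = (R22 *ᵥ x) ⬝ᵥ (R22 *ᵥ x)
    simp only [dotProduct]
    rw [sum_split_aux hrn.le (fun i => (Z *ᵥ x) i * (Z *ᵥ x) i)]
    rw [Finset.sum_eq_zero (fun j _ => by rw [hZcl j]; ring), zero_add]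
    exact Finset.sum_congr rfl fun j _ => by rw [hZemb j]
  unfold sigmaMax
  congr 1
  ext t
  simp only [Set.mem_setOf_eq]
  constructor
  · rintro ⟨x, hx, ht⟩
    exact ⟨x, hx, by rw [ht]; exact (hnorm x).symm⟩
  · rintro ⟨x, hx, ht⟩
    exact ⟨x, hx, by rw [ht]; exact hnorm x⟩
end
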